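/- arXiv:2003.13548 — 3 statements merged into one kernel-verified Lean document; each statement's English description precedes it below -/
import Mathlib

section
/- The Linial arrangement in ℝ⁴ consisting of the 6 affine hyperplanes x_i − x_j = 1 for 1 ≤ i < j ≤ 4 has exactly 36 maximal cells, i.e., the complement ℝ⁴ \ ⋃_{i<j} {x | x_i − x_j = 1} has exactly 36 connected components. -/
/-!
Each point off the hyperplanes has a sign vector recording on which side of every hyperplane it
lies. The sign vector is locally constant on the complement and its fibres are intersections of
open half-spaces, hence convex, so the connected components of the complement correspond to the
realizable sign vectors. For the Linial arrangement the identities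
`(xᵢ - xⱼ) + (xⱼ - xₖ) = xᵢ - xₖ`, `(xᵢ - xₗ) + (xⱼ - xₖ) = (xᵢ - xₖ) + (xⱼ - xₗ)` and
`(xᵢ - xⱼ) + (xⱼ - xₗ) = (xᵢ - xₖ) + (xₖ - xₗ)` forbid differences above `1` from summing to
differences below `1`. In `ℝ⁴` exactly 36 sign vectors survive these constraints, and each of
them is realized by a point of `(2/3) ℤ⁴`.
-/

open Set

noncomputable def Continuous.connectedComponentsEquivRange {X Y : Type*} [TopologicalSpace X]
    [TopologicalSpace Y] [TotallyDisconnectedSpace Y] {g : X → Y} (hg : Continuous g)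
    (hfib : ∀ y, IsPreconnected (g ⁻¹' {y})) : ConnectedComponents X ≃ range g :=
  (Equiv.ofInjective hg.connectedComponentsLift fun a b hab => by
      obtain ⟨x, rfl⟩ := ConnectedComponents.surjective_coe a
      obtain ⟨y, rfl⟩ := ConnectedComponents.surjective_coe b
      simp only [Continuous.connectedComponentsLift_apply_coe] at hab
      exact ConnectedComponents.coe_eq_coe.2 <| connectedComponent_eq <|
        (hfib (g x)).subset_connectedComponent rfl hab.symm).trans
    (Equiv.setCongr <| by
      rw [← ConnectedComponents.surjective_coe.range_comp,
        Continuous.connectedComponentsLift_comp_coe])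

def signedHalfLine (c : ℝ) (b : Bool) : Set ℝ := if b then Iio c else Ioi c

lemma decide_lt_eq_iff_mem_signedHalfLine {r c : ℝ} {b : Bool} (h : r ≠ c) :
    decide (r < c) = b ↔ r ∈ signedHalfLine c b := by
  cases b <;> simp [signedHalfLine, h.symm.le_iff_lt]

lemma convex_signedHalfLine (c : ℝ) (b : Bool) : Convex ℝ (signedHalfLine c b) := by
  cases b
  exacts [convex_Ioi c, convex_Iio c]

lemma isOpen_signedHalfLine (c : ℝ) (b : Bool) : IsOpen (signedHalfLine c b) := by
  cases b
  exacts [isOpen_Ioi, isOpen_Iio]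

namespace AffineArrangement

variable {E ι : Type*} [AddCommGroup E] [Module ℝ E] [TopologicalSpace E]
  (f : ι → E →L[ℝ] ℝ) (c : ι → ℝ)

def complement : Set E := {x | ∀ k, f k x ≠ c k}

noncomputable def signVector (x : E) : ι → Bool := fun k => decide (f k x < c k)

def openCell (s : ι → Bool) : Set E := ⋂ k, f k ⁻¹' signedHalfLine (c k) (s k)

def realizableSigns : Set (ι → Bool) := range ((complement f c).domRestrict (signVector f c))

variable {f c}

lemma mem_openCell_iff {x : E} (hx : x ∈ complement f c) (s : ι → Bool) :
    x ∈ openCell f c s ↔ signVector f c x = s := by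
  simp only [openCell, mem_iInter, mem_preimage, funext_iff, signVector,
    decide_lt_eq_iff_mem_signedHalfLine (hx _)]

variable (f c)

lemma openCell_subset_complement (s : ι → Bool) : openCell f c s ⊆ complement f c :=
  fun _ hx k hk => by
    have hk' := mem_iInter.1 hx k
    cases h : s k <;> simp_all [signedHalfLine]

lemma convex_openCell (s : ι → Bool) : Convex ℝ (openCell f c s) :=
  convex_iInter fun k => (convex_signedHalfLine _ _).linear_preimage (f k : E →ₗ[ℝ] ℝ)

lemma continuous_domRestrict_signVector :
    Continuous ((complement f c).domRestrict (signVector f c)) :=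
  continuous_pi fun k => IsLocallyConstant.continuous <| IsLocallyConstant.iff_isOpen_fiber.2
    fun b => by
      convert ((isOpen_signedHalfLine (c k) b).preimage (f k).continuous).preimage
        continuous_subtype_val using 1
      ext ⟨x, hx⟩
      exact decide_lt_eq_iff_mem_signedHalfLine (hx k)

variable [ContinuousAdd E] [ContinuousSMul ℝ E]

lemma isPreconnected_signVector_fiber (s : ι → Bool) :
    IsPreconnected ((complement f c).domRestrict (signVector f c) ⁻¹' {s}) := by
  have hfib : (complement f c).domRestrict (signVector f c) ⁻¹' {s} =
      Subtype.val ⁻¹' openCell f c s := by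
    ext ⟨x, hx⟩
    exact (mem_openCell_iff hx s).symm
  rw [hfib, ← Topology.IsInducing.subtypeVal.isPreconnected_image, Subtype.image_preimage_coe,
    inter_eq_right.2 (openCell_subset_complement f c s)]
  exact (convex_openCell f c s).isPreconnected

noncomputable def connectedComponentsEquivRealizableSigns :
    ConnectedComponents (complement f c) ≃ realizableSigns f c :=
  (continuous_domRestrict_signVector f c).connectedComponentsEquivRange
    (isPreconnected_signVector_fiber f c)

end AffineArrangement

namespace Linial

open AffineArrangement

abbrev Index (n : ℕ) := {p : Fin n × Fin n // p.1 < p.2}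

def form (n : ℕ) (p : Index n) : (Fin n → ℝ) →L[ℝ] ℝ :=
  ContinuousLinearMap.proj (R := ℝ) (φ := fun _ : Fin n => ℝ) p.1.1 -
    ContinuousLinearMap.proj p.1.2

lemma form_apply {n : ℕ} (p : Index n) (x : Fin n → ℝ) : form n p x = x p.1.1 - x p.1.2 := rfl

lemma complement_eq (n : ℕ) :
    {x : Fin n → ℝ | ∀ i j : Fin n, i < j → x i - x j ≠ 1} = complement (form n) 1 := by
  ext x
  exact ⟨fun hx p => hx _ _ p.2, fun hx i j hij => hx ⟨(i, j), hij⟩⟩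

variable {n : ℕ}

/-- `Far s i j` and `Near s i j`: `i < j` and `s` puts `xᵢ - xⱼ` above, resp. below, `1`. -/
def Far (s : Index n → Bool) (i j : Fin n) : Prop := ∃ h : i < j, s ⟨(i, j), h⟩ = false

def Near (s : Index n → Bool) (i j : Fin n) : Prop := ∃ h : i < j, s ⟨(i, j), h⟩ = true

instance (s : Index n → Bool) (i j : Fin n) : Decidable (Far s i j) := by
  unfold Far; infer_instance

instance (s : Index n → Bool) (i j : Fin n) : Decidable (Near s i j) := by
  unfold Near; infer_instance

def IsAdmissible (s : Index n → Bool) : Prop :=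
  (∀ i j k, Far s i j → Far s j k → ¬Near s i k) ∧
  (∀ i j k l, Far s i l → Far s j k → Near s i k → ¬Near s j l) ∧
  (∀ i j k l, Far s i j → Far s j l → Near s i k → ¬Near s k l)

instance : DecidablePred (IsAdmissible (n := n)) := fun s => by
  unfold IsAdmissible; infer_instance

lemma Far.one_lt {x : Fin n → ℝ} (hx : x ∈ complement (form n) 1) {i j : Fin n}
    (h : Far (signVector (form n) 1 x) i j) : 1 < x i - x j := by
  obtain ⟨hij, h⟩ := h
  have hne : x i - x j ≠ 1 := hx ⟨(i, j), hij⟩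
  exact lt_of_le_of_ne (not_lt.1 (of_decide_eq_false h)) hne.symm

lemma Near.lt_one {x : Fin n → ℝ} {i j : Fin n} (h : Near (signVector (form n) 1 x) i j) :
    x i - x j < 1 := by
  obtain ⟨_, h⟩ := h
  exact of_decide_eq_true h

lemma isAdmissible_of_mem_realizableSigns {s : Index n → Bool}
    (hs : s ∈ realizableSigns (form n) 1) : IsAdmissible s := by
  obtain ⟨⟨x, hx⟩, rfl⟩ := hs
  refine ⟨fun i j k hij hjk hik => ?_, fun i j k l hil hjk hik hjl => ?_,
    fun i j k l hij hjl hik hkl => ?_⟩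
  · linarith [hij.one_lt hx, hjk.one_lt hx, hik.lt_one]
  · linarith [hil.one_lt hx, hjk.one_lt hx, hik.lt_one, hjl.lt_one]
  · linarith [hij.one_lt hx, hjl.one_lt hx, hik.lt_one, hkl.lt_one]

def gridSign (k : Fin n → ℤ) : Index n → Bool := fun p => decide (k p.1.1 - k p.1.2 ≤ 1)

/-- Any factor in `(1/2, 1)` would do: it separates the integers `d ≤ 1` from those `d ≥ 2`. -/
lemma two_thirds_mul_intCast_lt_one_iff (d : ℤ) : (2 / 3 : ℝ) * d < 1 ↔ d ≤ 1 := by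
  constructor <;> intro h
  · by_contra! h'
    have : (2 : ℝ) ≤ d := by exact_mod_cast h'
    linarith
  · have : (d : ℝ) ≤ 1 := by exact_mod_cast h
    linarith

lemma two_thirds_mul_intCast_ne_one (d : ℤ) : (2 / 3 : ℝ) * d ≠ 1 := by
  intro h
  have : (2 * d : ℝ) = 3 := by linarith
  have : 2 * d = 3 := by exact_mod_cast this
  omega

lemma gridPoint_mem_complement (k : Fin n → ℤ) :
    (fun i => (2 / 3 : ℝ) * k i) ∈ complement (form n) 1 := fun p => by
  simpa [form_apply, ← mul_sub] using two_thirds_mul_intCast_ne_one (k p.1.1 - k p.1.2)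

lemma signVector_gridPoint (k : Fin n → ℤ) :
    signVector (form n) 1 (fun i => (2 / 3 : ℝ) * k i) = gridSign k := by
  funext p
  have h := two_thirds_mul_intCast_lt_one_iff (k p.1.1 - k p.1.2)
  push_cast at h
  simpa only [signVector, form_apply, gridSign, Pi.one_apply, ← mul_sub, decide_eq_decide]

lemma gridSign_mem_realizableSigns (k : Fin n → ℤ) : gridSign k ∈ realizableSigns (form n) 1 :=
  ⟨⟨_, gridPoint_mem_complement k⟩, signVector_gridPoint k⟩

set_option maxRecDepth 100000 in
lemma card_isAdmissible_four : (Finset.univ.filter (IsAdmissible (n := 4))).card = 36 := by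
  decide +kernel

set_option maxRecDepth 100000 in
lemma card_image_gridSign :
    ((Finset.Icc (-4 : ℤ) 4 ×ˢ Finset.Icc (-4 : ℤ) 4 ×ˢ Finset.Icc (-4 : ℤ) 4).image
      fun k => gridSign ![k.1, 0, k.2.1, k.2.2]).card = 36 := by
  decide +kernel

end Linial

open Linial AffineArrangement in
/-- The Linial arrangement in ℝ⁴ (the 6 affine hyperplanes xᵢ − xⱼ = 1 for
i < j) has exactly 36 maximal cells: its complement has 36 connected
components. -/
theorem linial_arrangement_R4_has_36_cells :
    Nat.card (ConnectedComponents
        ({x : Fin 4 → ℝ | ∀ i j : Fin 4, i < j → x i - x j ≠ 1} : Set (Fin 4 → ℝ)))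
      = 36 := by
  rw [complement_eq, Nat.card_congr (connectedComponentsEquivRealizableSigns _ _),
    Nat.card_coe_set_eq]
  apply le_antisymm
  · rw [← card_isAdmissible_four, ← ncard_coe_finset]
    exact ncard_le_ncard fun s hs => by simpa using isAdmissible_of_mem_realizableSigns hs
  · rw [← card_image_gridSign, ← ncard_coe_finset, Finset.coe_image]
    exact ncard_le_ncard <| image_subset_iff.2 fun k _ => gridSign_mem_realizableSigns _
end

section
/- Let H be the arrangement in ℝ^d of all 2^d − 1 hyperplanes normal to nonzero 0/1-vectors. For d = 2 the complement of the arrangement has 6 connected components, and for d = 3 it has 32 connected components. -/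
open Finset

namespace ZOA

variable {d : ℕ}

def bsum (v : Fin d → Bool) (x : Fin d → ℝ) : ℝ := ∑ i, (if v i then x i else 0)

def zsum (v : Fin d → Bool) (p : Fin d → ℤ) : ℤ := ∑ i, (if v i then p i else 0)

def Spts (d : ℕ) : Set (Fin d → ℝ) :=
  {x | ∀ v : Fin d → Bool, (∃ i, v i = true) → ∑ i, (if v i then x i else 0) ≠ 0}

noncomputable def fmap (x : Spts d) : (Fin d → Bool) → Bool := fun v => decide (0 < bsum v x.1)

lemma bsum_of_not_exists {v : Fin d → Bool} (h : ¬ ∃ i, v i = true) (x : Fin d → ℝ) :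
    bsum v x = 0 := by
  push_neg at h
  simp only [Bool.not_eq_true] at h
  simp [bsum, h]

lemma continuous_bsum (v : Fin d → Bool) : Continuous (bsum v) := by
  apply continuous_finset_sum
  intro i _
  by_cases h : v i = true <;> simp [h]
  · exact continuous_apply i
  · exact continuous_const

lemma isLinearMap_bsum (v : Fin d → Bool) : IsLinearMap ℝ (bsum v) := by
  constructor
  · intro x y
    simp only [bsum, ← Finset.sum_add_distrib]
    refine Finset.sum_congr rfl fun i _ => ?_
    by_cases h : v i = true <;> simp [h]
  · intro c x
    simp only [bsum, Finset.smul_sum]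
    refine Finset.sum_congr rfl fun i _ => ?_
    by_cases h : v i = true <;> simp [h]

lemma bsum_add_bsum (u v : Fin d → Bool) (x : Fin d → ℝ) :
    bsum u x + bsum v x = bsum (fun i => u i || v i) x + bsum (fun i => u i && v i) x := by
  simp only [bsum, ← Finset.sum_add_distrib]
  refine Finset.sum_congr rfl fun i _ => ?_
  by_cases hu : u i = true <;> by_cases hv : v i = true <;> simp [hu, hv]

lemma bsum_or_disjoint {u v : Fin d → Bool} (h : ∀ i, (u i && v i) = false) (x : Fin d → ℝ) :
    bsum (fun i => u i || v i) x = bsum u x + bsum v x := by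
  simp only [bsum, ← Finset.sum_add_distrib]
  refine Finset.sum_congr rfl fun i _ => ?_
  have hi := h i
  by_cases hu : u i = true <;> by_cases hv : v i = true <;> simp_all

lemma bsum_int (v : Fin d → Bool) (p : Fin d → ℤ) :
    bsum v (fun i => (p i : ℝ)) = ((zsum v p : ℤ) : ℝ) := by
  simp [bsum, zsum, apply_ite (fun z : ℤ => (z : ℝ))]


def cell (a : (Fin d → Bool) → Bool) : Set (Fin d → ℝ) :=
  ⋂ v : Fin d → Bool, {x | (a v = true → 0 < bsum v x) ∧
      (a v = false → (∃ i, v i = true) → bsum v x < 0)}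

lemma isOpen_cell (a : (Fin d → Bool) → Bool) : IsOpen (cell a) := by
  refine isOpen_iInter_of_finite fun v => ?_
  by_cases hav : a v = true
  · have : {x : Fin d → ℝ | (a v = true → 0 < bsum v x) ∧
        (a v = false → (∃ i, v i = true) → bsum v x < 0)} = {x | 0 < bsum v x} := by
      ext x; simp [hav]
    rw [this]
    exact isOpen_lt continuous_const (continuous_bsum v)
  · rw [Bool.not_eq_true] at hav
    by_cases hex : ∃ i, v i = true
    · have : {x : Fin d → ℝ | (a v = true → 0 < bsum v x) ∧
          (a v = false → (∃ i, v i = true) → bsum v x < 0)} = {x | bsum v x < 0} := by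
        ext x; simp [hav, hex]
      rw [this]
      exact isOpen_lt (continuous_bsum v) continuous_const
    · have : {x : Fin d → ℝ | (a v = true → 0 < bsum v x) ∧
          (a v = false → (∃ i, v i = true) → bsum v x < 0)} = Set.univ := by
        ext x; simp [hav, hex]
      rw [this]; exact isOpen_univ

lemma convex_cell (a : (Fin d → Bool) → Bool) : Convex ℝ (cell a) := by
  refine convex_iInter fun v => ?_
  by_cases hav : a v = true
  · have : {x : Fin d → ℝ | (a v = true → 0 < bsum v x) ∧
        (a v = false → (∃ i, v i = true) → bsum v x < 0)} = {x | 0 < bsum v x} := by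
      ext x; simp [hav]
    rw [this]
    exact convex_halfSpace_gt (isLinearMap_bsum v) 0
  · rw [Bool.not_eq_true] at hav
    by_cases hex : ∃ i, v i = true
    · have : {x : Fin d → ℝ | (a v = true → 0 < bsum v x) ∧
          (a v = false → (∃ i, v i = true) → bsum v x < 0)} = {x | bsum v x < 0} := by
        ext x; simp [hav, hex]
      rw [this]
      exact convex_halfSpace_lt (isLinearMap_bsum v) 0
    · have : {x : Fin d → ℝ | (a v = true → 0 < bsum v x) ∧
          (a v = false → (∃ i, v i = true) → bsum v x < 0)} = Set.univ := by
        ext x; simp [hav, hex]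
      rw [this]; exact convex_univ

lemma cell_subset_S (a : (Fin d → Bool) → Bool) : cell a ⊆ Spts d := by
  intro x hx v hv
  have hxv := Set.mem_iInter.mp hx v
  by_cases hav : a v = true
  · exact (hxv.1 hav).ne'
  · rw [Bool.not_eq_true] at hav
    exact ne_of_lt (hxv.2 hav hv)

lemma mem_cell_iff (x : Spts d) (a : (Fin d → Bool) → Bool) :
    fmap x = a ↔ x.1 ∈ cell a := by
  constructor
  · rintro rfl
    refine Set.mem_iInter.mpr fun v => ⟨fun h => of_decide_eq_true h, fun h hv => ?_⟩
    have h1 := of_decide_eq_false h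
    have h2 := x.2 v hv
    rcases lt_trichotomy (bsum v x.1) 0 with h3 | h3 | h3
    · exact h3
    · exact absurd h3 h2
    · exact absurd h3 h1
  · intro hx
    funext v
    have hxv := Set.mem_iInter.mp hx v
    by_cases hav : a v = true
    · rw [hav]
      exact decide_eq_true (hxv.1 hav)
    · rw [Bool.not_eq_true] at hav
      rw [hav]
      by_cases hex : ∃ i, v i = true
      · exact decide_eq_false (not_lt.mpr (le_of_lt (hxv.2 hav hex)))
      · show decide (0 < bsum v x.1) = false
        rw [bsum_of_not_exists hex]
        simp

lemma continuous_fmap : Continuous (fmap (d := d)) := by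
  rw [continuous_discrete_rng]
  intro a
  have : fmap ⁻¹' {a} = Subtype.val ⁻¹' (cell a) := by
    ext x
    simp only [Set.mem_preimage, Set.mem_singleton_iff]
    exact mem_cell_iff x a
  rw [this]
  exact (isOpen_cell a).preimage continuous_subtype_val

lemma image_fiber (a : (Fin d → Bool) → Bool) :
    Subtype.val '' (fmap ⁻¹' {a} : Set (Spts d)) = cell a := by
  ext x
  constructor
  · rintro ⟨y, hy, rfl⟩
    exact (mem_cell_iff y a).mp hy
  · intro hx
    exact ⟨⟨x, cell_subset_S a hx⟩, (mem_cell_iff _ a).mpr hx, rfl⟩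

lemma isPreconnected_fiber (a : (Fin d → Bool) → Bool) :
    IsPreconnected (fmap ⁻¹' {a} : Set (Spts d)) := by
  rw [← Topology.IsInducing.subtypeVal.isPreconnected_image, image_fiber]
  exact (convex_cell a).isPreconnected

theorem card_components_eq (d : ℕ) :
    Nat.card (ConnectedComponents (Spts d)) = Nat.card (Set.range (fmap (d := d))) := by
  have hlift := (continuous_fmap (d := d)).connectedComponentsLift
  have hinj : Function.Injective (continuous_fmap (d := d)).connectedComponentsLift := by
    intro c1 c2 h
    obtain ⟨x, rfl⟩ := ConnectedComponents.surjective_coe c1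
    obtain ⟨y, rfl⟩ := ConnectedComponents.surjective_coe c2
    rw [Continuous.connectedComponentsLift_apply_coe,
      Continuous.connectedComponentsLift_apply_coe] at h
    have hx : x ∈ (fmap ⁻¹' {fmap y} : Set (Spts d)) := h
    have hy : y ∈ (fmap ⁻¹' {fmap y} : Set (Spts d)) := rfl
    have := (isPreconnected_fiber (fmap y)).subset_connectedComponent hy hx
    exact (ConnectedComponents.coe_eq_coe' ).mpr this
  have hr : Set.range (continuous_fmap (d := d)).connectedComponentsLift
      = Set.range (fmap (d := d)) := by
    ext b
    constructor
    · rintro ⟨c, rfl⟩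
      obtain ⟨x, rfl⟩ := ConnectedComponents.surjective_coe c
      exact ⟨x, (Continuous.connectedComponentsLift_apply_coe _ x).symm⟩
    · rintro ⟨x, rfl⟩
      exact ⟨x, Continuous.connectedComponentsLift_apply_coe _ x⟩
  rw [← Nat.card_range_of_injective hinj, hr]


def Qpred (a : (Fin d → Bool) → Bool) : Prop :=
  a (fun _ => false) = false ∧
  ∀ u v : Fin d → Bool,
    (a u = true → a v = true →
      (a (fun i => u i || v i) = true ∨ a (fun i => u i && v i) = true)) ∧
    (a u = false → a v = false →
      (a (fun i => u i || v i) = false ∨ a (fun i => u i && v i) = false)) ∧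
    ((∀ i, (u i && v i) = false) →
      (a u = true → a v = true → a (fun i => u i || v i) = true) ∧
      (a u = false → a v = false → a (fun i => u i || v i) = false))

instance : DecidablePred (Qpred (d := d)) := fun a =>
  inferInstanceAs (Decidable (_ ∧ _))

lemma qpred_fmap (x : Spts d) : Qpred (fmap x) := by
  have hpos : ∀ v, fmap x v = true ↔ 0 < bsum v x.1 := fun v => decide_eq_true_iff
  have hneg : ∀ v, fmap x v = false ↔ bsum v x.1 ≤ 0 := fun v => by
    rw [show fmap x v = decide (0 < bsum v x.1) from rfl, decide_eq_false_iff_not, not_lt]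
  refine ⟨?_, fun u v => ⟨?_, ?_, fun hd => ⟨?_, ?_⟩⟩⟩
  · rw [hneg, bsum_of_not_exists (by simp)]
  · intro hu hv
    rw [hpos] at hu hv
    by_contra hcon
    push_neg at hcon
    obtain ⟨h1, h2⟩ := hcon
    rw [ne_eq, Bool.not_eq_true, hneg] at h1
    rw [ne_eq, Bool.not_eq_true, hneg] at h2
    have := bsum_add_bsum u v x.1
    linarith
  · intro hu hv
    rw [hneg] at hu hv
    by_contra hcon
    push_neg at hcon
    obtain ⟨h1, h2⟩ := hcon
    rw [ne_eq, Bool.not_eq_false, hpos] at h1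
    rw [ne_eq, Bool.not_eq_false, hpos] at h2
    have := bsum_add_bsum u v x.1
    linarith
  · intro hu hv
    rw [hpos] at hu hv ⊢
    rw [bsum_or_disjoint hd]
    linarith
  · intro hu hv
    rw [hneg] at hu hv ⊢
    rw [bsum_or_disjoint hd]
    linarith


lemma sum_range_pow_lt : ∀ m : ℕ, ∑ x ∈ Finset.range m, 2 ^ x < 2 ^ m
  | 0 => by simp
  | (m + 1) => by
    have := sum_range_pow_lt m
    rw [Finset.sum_range_succ, pow_succ]
    omega

lemma sum_pow_lt (d : ℕ) (v : Fin d → Bool) :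
    (∑ i : Fin d, if v i then 2 ^ (i : ℕ) else 0) < 2 ^ d := by
  have h1 : (∑ i : Fin d, if v i then 2 ^ (i : ℕ) else 0) ≤ ∑ i : Fin d, 2 ^ (i : ℕ) := by
    refine Finset.sum_le_sum fun i _ => ?_
    by_cases h : v i = true <;> simp [h]
  have h2 : ∑ i : Fin d, 2 ^ (i : ℕ) < 2 ^ d := by
    rw [Fin.sum_univ_eq_sum_range (fun n => 2 ^ n)]
    exact sum_range_pow_lt d
  omega

def vidx (v : Fin d → Bool) : Fin (2 ^ d) :=
  ⟨∑ i : Fin d, if v i then 2 ^ (i : ℕ) else 0, sum_pow_lt d v⟩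

def vbit (j : Fin (2 ^ d)) : Fin d → Bool := fun i => decide ((j : ℕ) / 2 ^ (i : ℕ) % 2 = 1)

def QB (b : Fin (2 ^ d) → Bool) : Prop :=
  b (vidx fun _ => false) = false ∧
  ∀ u v : Fin d → Bool,
    (b (vidx u) = true → b (vidx v) = true →
      (b (vidx fun i => u i || v i) = true ∨ b (vidx fun i => u i && v i) = true)) ∧
    (b (vidx u) = false → b (vidx v) = false →
      (b (vidx fun i => u i || v i) = false ∨ b (vidx fun i => u i && v i) = false)) ∧
    ((∀ i, (u i && v i) = false) →
      (b (vidx u) = true → b (vidx v) = true → b (vidx fun i => u i || v i) = true) ∧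
      (b (vidx u) = false → b (vidx v) = false → b (vidx fun i => u i || v i) = false))

instance : DecidablePred (QB (d := d)) := fun _ =>
  inferInstanceAs (Decidable (_ ∧ _))

def phi (a : (Fin d → Bool) → Bool) : Fin (2 ^ d) → Bool := fun j => a (vbit j)

lemma phi_injective (hbit : ∀ v : Fin d → Bool, vbit (vidx v) = v) :
    Function.Injective (phi (d := d)) := by
  intro a a' h
  funext v
  have := congrFun h (vidx v)
  simpa [phi, hbit v] using this

lemma qb_phi (hbit : ∀ v : Fin d → Bool, vbit (vidx v) = v)
    {a : (Fin d → Bool) → Bool} (ha : Qpred a) : QB (phi a) := by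
  obtain ⟨h0, h1⟩ := ha
  refine ⟨?_, fun u v => ?_⟩
  · simpa [phi, hbit] using h0
  · have := h1 u v
    simpa only [phi, hbit] using this

lemma card_range_fmap (d n : ℕ) (pts : Fin n → Fin d → ℤ)
    (hmem : ∀ k v, (∃ i, v i = true) → zsum v (pts k) ≠ 0)
    (hinj : Function.Injective fun k => (fun v => decide (0 < zsum v (pts k))))
    (hbit : ∀ v : Fin d → Bool, vbit (vidx v) = v)
    (hcard : (Finset.univ.filter (QB (d := d))).card = n) :
    Nat.card (Set.range (fmap (d := d))) = n := by
  have hSmem : ∀ k, (fun i => ((pts k i : ℤ) : ℝ)) ∈ Spts d := by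
    intro k v hv
    have h := hmem k v hv
    show bsum v (fun i => ((pts k i : ℤ) : ℝ)) ≠ 0
    rw [bsum_int]
    exact_mod_cast h
  set xpt : Fin n → Spts d := fun k => ⟨_, hSmem k⟩ with hxpt
  have hfx : ∀ k, fmap (xpt k) = fun v => decide (0 < zsum v (pts k)) := by
    intro k
    funext v
    show decide _ = decide _
    rw [decide_eq_decide]
    rw [show bsum v (xpt k).1 = ((zsum v (pts k) : ℤ) : ℝ) from bsum_int _ _]
    exact_mod_cast Iff.rfl
  have hinj' : Function.Injective (fun k => fmap (xpt k)) := by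
    have : (fun k => fmap (xpt k)) = fun k => (fun v => decide (0 < zsum v (pts k))) :=
      funext hfx
    rw [this]
    exact hinj
  rw [Nat.card_coe_set_eq]
  refine le_antisymm ?_ ?_
  · have hsub : phi '' Set.range (fmap (d := d)) ⊆ ↑(Finset.univ.filter (QB (d := d))) := by
      rintro b ⟨_, ⟨x, rfl⟩, rfl⟩
      simp only [Finset.coe_filter, Finset.mem_univ, true_and, Set.mem_setOf_eq]
      exact qb_phi hbit (qpred_fmap x)
    calc (Set.range (fmap (d := d))).ncard
        = (phi '' Set.range (fmap (d := d))).ncard :=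
          (Set.ncard_image_of_injective _ (phi_injective hbit)).symm
      _ ≤ (↑(Finset.univ.filter (QB (d := d))) : Set _).ncard :=
          Set.ncard_le_ncard hsub (Set.toFinite _)
      _ = n := by rw [Set.ncard_coe_finset, hcard]
  · have hsub2 : Set.range (fun k => fmap (xpt k)) ⊆ Set.range (fmap (d := d)) := by
      rintro b ⟨k, rfl⟩
      exact ⟨xpt k, rfl⟩
    calc n = (Set.range (fun k => fmap (xpt k))).ncard := by
          rw [← Nat.card_coe_set_eq, Nat.card_range_of_injective hinj',
            Nat.card_eq_fintype_card, Fintype.card_fin]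
      _ ≤ (Set.range (fmap (d := d))).ncard := Set.ncard_le_ncard hsub2 (Set.toFinite _)

end ZOA

/-- For the arrangement of all 2^d − 1 hyperplanes normal to nonzero
0/1-vectors in ℝ^d: for d = 2 the complement has 6 connected components and
for d = 3 it has 32 connected components (OEIS A034997). -/
theorem zero_one_arrangement_components_d2_d3 :
    Nat.card (ConnectedComponents
        ({x : Fin 2 → ℝ | ∀ v : Fin 2 → Bool, (∃ i, v i = true) →
            ∑ i, (if v i then x i else 0) ≠ 0} : Set (Fin 2 → ℝ))) = 6
    ∧ Nat.card (ConnectedComponents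
        ({x : Fin 3 → ℝ | ∀ v : Fin 3 → Bool, (∃ i, v i = true) →
            ∑ i, (if v i then x i else 0) ≠ 0} : Set (Fin 3 → ℝ))) = 32 := by
  constructor
  · exact (ZOA.card_components_eq 2).trans
      (ZOA.card_range_fmap 2 6
        ![![-2, 1], ![-1, -1], ![-1, 2], ![1, -2], ![1, 1], ![2, -1]]
        (by decide) (by decide) (by decide) (by decide))
  · exact (ZOA.card_components_eq 3).trans
      (ZOA.card_range_fmap 3 32
        ![![-3, -1, 2], ![-3, 1, 1], ![-3, 2, -1], ![-3, 2, 2],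
          ![-2, -2, 1], ![-2, -2, 3], ![-2, 1, -2], ![-2, 1, 3], ![-2, 3, -2], ![-2, 3, 1],
          ![-1, -3, 2], ![-1, -1, -1], ![-1, -1, 3], ![-1, 2, -3], ![-1, 2, 2], ![-1, 3, -1],
          ![1, -3, 1], ![1, -2, -2], ![1, -2, 3], ![1, 1, -3], ![1, 1, 1], ![1, 3, -2],
          ![2, -3, -1], ![2, -3, 2], ![2, -1, -3], ![2, -1, 2], ![2, 2, -3], ![2, 2, -1],
          ![3, -2, -2], ![3, -2, 1], ![3, -1, -1], ![3, 1, -2]]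
        (by decide) (by decide) (by decide) (by decide))
end

section
/- Let H = {h₁,…,hₙ} ⊆ ℝ^d \ {0} and let σ be a maximal (full-dimensional) cell of the arrangement with signature s(σ) = {i | σ ⊆ {x | ⟨x,h_i⟩ ≤ 0}}. If f is a facet of σ spanning the hyperplane h_k^⊥ (and σ is not contained in h_k^⊥), then the cell σ' on the other side of f has signature s(σ') obtained from s(σ) by toggling exactly the indices i with h_i parallel to h_k (i.e., h_i^⊥ = h_k^⊥). -/
/-- Flipping signatures across a facet: let x, y be generic points whose closed
cells σ(x), σ(y) are distinct but share a point z lying on the hyperplane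
h_k^⊥ and on no hyperplane non-parallel to h_k (so the common facet spans
h_k^⊥).  Then the signature of σ(y) is obtained from that of σ(x) by toggling
exactly the indices i with hᵢ parallel to h_k (i.e. hᵢ^⊥ = h_k^⊥). -/
theorem signature_of_neighboring_cell
    {d n : ℕ} (h : Fin n → (Fin d → ℝ)) (hnz : ∀ i, h i ≠ 0) (k : Fin n)
    (x y : Fin d → ℝ)
    (hx : ∀ i, ∑ j, x j * h i j ≠ 0) (hy : ∀ i, ∑ j, y j * h i j ≠ 0)
    (σx σy : Set (Fin d → ℝ))
    (hσx : σx = {w : Fin d → ℝ | ∀ i,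
      (0 < ∑ j, x j * h i j → 0 ≤ ∑ j, w j * h i j) ∧
      (∑ j, x j * h i j < 0 → ∑ j, w j * h i j ≤ 0)})
    (hσy : σy = {w : Fin d → ℝ | ∀ i,
      (0 < ∑ j, y j * h i j → 0 ≤ ∑ j, w j * h i j) ∧
      (∑ j, y j * h i j < 0 → ∑ j, w j * h i j ≤ 0)})
    (hne : σx ≠ σy)
    (z : Fin d → ℝ) (hzk : ∑ j, z j * h k j = 0)
    (hzgen : ∀ i, {w : Fin d → ℝ | ∑ j, w j * h i j = 0}
        ≠ {w : Fin d → ℝ | ∑ j, w j * h k j = 0} → ∑ j, z j * h i j ≠ 0)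
    (hzx : z ∈ σx) (hzy : z ∈ σy) :
    {i : Fin n | ∑ j, y j * h i j < 0}
      = symmDiff {i : Fin n | ∑ j, x j * h i j < 0}
          {i : Fin n | {w : Fin d → ℝ | ∑ j, w j * h i j = 0}
            = {w : Fin d → ℝ | ∑ j, w j * h k j = 0}} := by
  subst hσx hσy
  simp only [Set.mem_setOf_eq] at hzx hzy
  -- Lemma B: proportionality identity for parallel hyperplanes
  have hB : ∀ i : Fin n,
      {w : Fin d → ℝ | ∑ j, w j * h i j = 0} = {w : Fin d → ℝ | ∑ j, w j * h k j = 0} →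
      (∑ j, y j * h k j) * (∑ j, x j * h i j)
        = (∑ j, x j * h k j) * (∑ j, y j * h i j) := by
    intro i hik
    have hu : (fun j => (∑ j, y j * h k j) * x j - (∑ j, x j * h k j) * y j)
        ∈ {w : Fin d → ℝ | ∑ j, w j * h k j = 0} := by
      simp only [Set.mem_setOf_eq, sub_mul, mul_assoc, Finset.sum_sub_distrib,
        ← Finset.mul_sum]
      ring
    rw [← hik] at hu
    simp only [Set.mem_setOf_eq, sub_mul, mul_assoc, Finset.sum_sub_distrib,
      ← Finset.mul_sum] at hu
    linarith
  -- Lemma A: for non-parallel i, signs of x and y agree (via z)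
  have hA : ∀ i : Fin n,
      {w : Fin d → ℝ | ∑ j, w j * h i j = 0} ≠ {w : Fin d → ℝ | ∑ j, w j * h k j = 0} →
      ((∑ j, x j * h i j) < 0 ↔ (∑ j, y j * h i j) < 0) := by
    intro i hik
    have hz := hzgen i hik
    have h1 := hzx i
    have h2 := hzy i
    constructor
    · intro hxneg
      rcases (hy i).lt_or_gt with h' | h'
      · exact h'
      · exact absurd (le_antisymm (h1.2 hxneg) (h2.1 h')) hz
    · intro hyneg
      rcases (hx i).lt_or_gt with h' | h'
      · exact h'
      · exact absurd (le_antisymm (h2.2 hyneg) (h1.1 h')) hz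
  -- Lemma C: the sign at k flips
  have hC : (∑ j, x j * h k j) * (∑ j, y j * h k j) < 0 := by
    by_contra hc
    push_neg at hc
    have hprod : 0 < (∑ j, x j * h k j) * (∑ j, y j * h k j) :=
      lt_of_le_of_ne hc (Ne.symm (mul_ne_zero (hx k) (hy k)))
    have hsame : ∀ i, ((∑ j, x j * h i j) < 0 ↔ (∑ j, y j * h i j) < 0) := by
      intro i
      by_cases hik : {w : Fin d → ℝ | ∑ j, w j * h i j = 0}
          = {w : Fin d → ℝ | ∑ j, w j * h k j = 0}
      · have hE := hB i hik
        have hk2 : 0 < (∑ j, y j * h k j) * (∑ j, y j * h k j) :=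
          mul_self_pos.mpr (hy k)
        have hE2 : ((∑ j, y j * h k j) * (∑ j, y j * h k j)) * (∑ j, x j * h i j)
            = ((∑ j, x j * h k j) * (∑ j, y j * h k j)) * (∑ j, y j * h i j) := by
          linear_combination (∑ j, y j * h k j) * hE
        constructor
        · intro hxi
          by_contra hyi
          push_neg at hyi
          have hyi' : 0 < ∑ j, y j * h i j := lt_of_le_of_ne hyi (Ne.symm (hy i))
          have n1 : ((∑ j, y j * h k j) * (∑ j, y j * h k j)) * (∑ j, x j * h i j) < 0 :=
            mul_neg_of_pos_of_neg hk2 hxi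
          have n2 : 0 < ((∑ j, x j * h k j) * (∑ j, y j * h k j)) * (∑ j, y j * h i j) :=
            mul_pos hprod hyi'
          linarith
        · intro hyi
          by_contra hxi
          push_neg at hxi
          have hxi' : 0 < ∑ j, x j * h i j := lt_of_le_of_ne hxi (Ne.symm (hx i))
          have n1 : 0 < ((∑ j, y j * h k j) * (∑ j, y j * h k j)) * (∑ j, x j * h i j) :=
            mul_pos hk2 hxi'
          have n2 : ((∑ j, x j * h k j) * (∑ j, y j * h k j)) * (∑ j, y j * h i j) < 0 :=
            mul_neg_of_pos_of_neg hprod hyi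
          linarith
      · exact hA i hik
    apply hne
    ext w
    simp only [Set.mem_setOf_eq]
    have hpos : ∀ i, (0 < ∑ j, x j * h i j ↔ 0 < ∑ j, y j * h i j) := by
      intro i
      constructor
      · intro h'
        rcases (hy i).lt_or_gt with h'' | h''
        · exact absurd ((hsame i).mpr h'') (not_lt.mpr h'.le)
        · exact h''
      · intro h'
        rcases (hx i).lt_or_gt with h'' | h''
        · exact absurd ((hsame i).mp h'') (not_lt.mpr h'.le)
        · exact h''
    constructor
    · intro hw i
      exact ⟨fun hyi => (hw i).1 ((hpos i).mpr hyi), fun hyi => (hw i).2 ((hsame i).mpr hyi)⟩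
    · intro hw i
      exact ⟨fun hxi => (hw i).1 ((hpos i).mp hxi), fun hxi => (hw i).2 ((hsame i).mp hxi)⟩
  -- flip for parallel indices
  have hflip : ∀ i : Fin n,
      {w : Fin d → ℝ | ∑ j, w j * h i j = 0} = {w : Fin d → ℝ | ∑ j, w j * h k j = 0} →
      ((∑ j, y j * h i j) < 0 ↔ ¬ (∑ j, x j * h i j) < 0) := by
    intro i hik
    have hE := hB i hik
    have hsq : 0 < ((∑ j, x j * h k j) * (∑ j, y j * h i j))
        * ((∑ j, x j * h k j) * (∑ j, y j * h i j)) :=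
      mul_self_pos.mpr (mul_ne_zero (hx k) (hy i))
    have hE2 : ((∑ j, x j * h k j) * (∑ j, y j * h i j))
          * ((∑ j, x j * h k j) * (∑ j, y j * h i j))
        = ((∑ j, x j * h k j) * (∑ j, y j * h k j))
          * ((∑ j, x j * h i j) * (∑ j, y j * h i j)) := by
      linear_combination (-((∑ j, x j * h k j) * (∑ j, y j * h i j))) * hE
    have hprodneg : (∑ j, x j * h i j) * (∑ j, y j * h i j) < 0 := by
      by_contra hcd
      push_neg at hcd
      nlinarith [hsq, hE2, hC, hcd]
    rcases mul_neg_iff.mp hprodneg with ⟨h1, h2⟩ | ⟨h1, h2⟩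
    · exact ⟨fun _ => not_lt.mpr h1.le, fun _ => h2⟩
    · exact ⟨fun hyi => absurd hyi (not_lt.mpr h2.le),
        fun hxi => absurd h1 hxi⟩
  ext i
  simp only [Set.mem_setOf_eq, Set.mem_symmDiff]
  by_cases hik : {w : Fin d → ℝ | ∑ j, w j * h i j = 0}
      = {w : Fin d → ℝ | ∑ j, w j * h k j = 0}
  · have := hflip i hik
    tauto
  · have := hA i hik
    tauto
end
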